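/- arXiv:1311.6760 — 4 statements merged into one kernel-verified Lean document; each statement's English description precedes it below -/
import Mathlib

section
/- Let x be a random vector on ℝ^d distributed as the Gaussian N(m, C) with C positive definite, let φ : ℝ^d → ℝ^{d'} be Borel measurable, let η on ℝ^{d'} be Gaussian N(0, R) with R positive definite and independent of x, and set y = φ(x) + η. Then for (law of y)-almost every y₀, the regular conditional distribution of x given y = y₀ is absolutely continuous with respect to Lebesgue measure on ℝ^d with density proportional to exp(−J(x)), where the misfit function is J(x) = ½ (x − m)ᵀ C⁻¹ (x − m) + ½ (y₀ − φ(x))ᵀ R⁻¹ (y₀ − φ(x)). -/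
/-!
By independence, the law of `(x, η)` is the product of the two Gaussian laws, and the shear
`(u, e) ↦ (φ u + e, u)` preserves Lebesgue measure, so `(y, x)` has a Lebesgue density
proportional to `exp (-J y₀ u)`. Such a joint density factors as its `y`-marginal times the
probability kernel `y₀ ↦ exp (-J y₀ ·) / ∫ exp (-J y₀ ·) · Lebesgue`, and any kernel that
disintegrates the joint law agrees `(law y)`-a.e. with the conditional distribution.
`exp (-J y₀ ·)` is integrable because it is dominated by the prior exponential, whose
normalisation `N(m, C)` is a probability measure, being the law of `x`.
-/

open MeasureTheory ProbabilityTheory Matrix Real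

/-- The Gaussian measure `N(m, C)` on `Fin d → ℝ` for positive definite `C`, defined by its
Lebesgue density `(2π)^{-d/2} det(C)^{-1/2} exp(−½ (x−m)ᵀ C⁻¹ (x−m))`. -/
noncomputable def multiGaussian {d : ℕ} (m : Fin d → ℝ) (C : Matrix (Fin d) (Fin d) ℝ) :
    Measure (Fin d → ℝ) :=
  volume.withDensity fun x =>
    ENNReal.ofReal ((Real.sqrt ((2 * π) ^ d * C.det))⁻¹ *
      Real.exp (-(1 / 2) * ((x - m) ⬝ᵥ C⁻¹.mulVec (x - m))))

open scoped ENNReal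

namespace MeasureTheory.Measure

variable {α β γ : Type*} [MeasurableSpace α] [MeasurableSpace β] [MeasurableSpace γ]

theorem map_withDensity_comp (μ : Measure α) {T : α → β} (hT : Measurable T) {g : β → ℝ≥0∞}
    (hg : Measurable g) : (μ.withDensity (g ∘ T)).map T = (μ.map T).withDensity g := by
  ext s hs
  rw [map_apply hT hs, withDensity_apply _ (hT hs), withDensity_apply _ hs,
    setLIntegral_map hs hg hT, Function.comp_def]

theorem map_fst_withDensity_prod (μ : Measure α) (ν : Measure β) [SFinite μ] [SFinite ν]
    {g : α × β → ℝ≥0∞} (hg : Measurable g) :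
    ((μ.prod ν).withDensity g).map Prod.fst = μ.withDensity fun a => ∫⁻ b, g (a, b) ∂ν := by
  ext s hs
  rw [map_apply measurable_fst hs, withDensity_apply _ (measurable_fst hs),
    withDensity_apply _ hs, ← Set.prod_univ, setLIntegral_prod _ hg.aemeasurable]
  simp_rw [Measure.restrict_univ]

theorem map_shear_prod_withDensity [AddCommGroup γ] [MeasurableAdd₂ γ] [MeasurableSub₂ γ]
    {μ : Measure α} {ν : Measure γ} [SFinite μ] [SFinite ν] [ν.IsAddLeftInvariant]
    {p : α → ℝ≥0∞} {q : γ → ℝ≥0∞} (hp : Measurable p) (hq : Measurable q)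
    {φ : α → γ} (hφ : Measurable φ) :
    ((μ.withDensity p).prod (ν.withDensity q)).map (fun z => (φ z.1 + z.2, z.1)) =
      (ν.prod μ).withDensity fun z => p z.2 * q (z.1 - φ z.2) := by
  have hshear : MeasurePreserving (fun z : α × γ => (φ z.1 + z.2, z.1)) (μ.prod ν) (ν.prod μ) :=
    measurePreserving_swap.comp <| (MeasurePreserving.id μ).skew_product
      (g := fun u e => φ u + e) (by fun_prop) (ae_of_all _ fun u => map_add_left_eq_self ν (φ u))
  have hdensity : (fun z : α × γ => p z.1 * q z.2) =
      (fun z : γ × α => p z.2 * q (z.1 - φ z.2)) ∘ fun z => (φ z.1 + z.2, z.1) := by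
    funext z
    simp
  rw [prod_withDensity hp hq, hdensity, map_withDensity_comp _ hshear.measurable (by fun_prop),
    hshear.map_eq]

end MeasureTheory.Measure

namespace ProbabilityTheory

theorem IndepFun.map_add_prod_eq_withDensity
    {Ω α γ : Type*} [MeasurableSpace Ω] [MeasurableSpace α] [MeasurableSpace γ]
    [AddCommGroup γ] [MeasurableAdd₂ γ] [MeasurableSub₂ γ]
    {μ : Measure Ω} [IsFiniteMeasure μ] {ρ : Measure α} {ν : Measure γ} [SFinite ρ] [SFinite ν]
    [ν.IsAddLeftInvariant] {X : Ω → α} {η : Ω → γ} (hind : IndepFun X η μ)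
    (hX : Measurable X) (hη : Measurable η) {p : α → ℝ≥0∞} {q : γ → ℝ≥0∞}
    (hp : Measurable p) (hq : Measurable q)
    (hXlaw : μ.map X = ρ.withDensity p) (hηlaw : μ.map η = ν.withDensity q)
    {φ : α → γ} (hφ : Measurable φ) :
    μ.map (fun ω => (φ (X ω) + η ω, X ω)) =
      (ν.prod ρ).withDensity fun z => p z.2 * q (z.1 - φ z.2) := by
  have hT : Measurable fun z : α × γ => (φ z.1 + z.2, z.1) := by fun_prop
  rw [← Measure.map_shear_prod_withDensity hp hq hφ, ← hXlaw, ← hηlaw,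
    ← (indepFun_iff_map_prod_eq_prod_map_map hX.aemeasurable hη.aemeasurable).mp hind,
    Measure.map_map hT (hX.prodMk hη)]
  rfl

variable {α β : Type*} [MeasurableSpace α] [MeasurableSpace β]

noncomputable def normalizedDensityKernel (ρ : Measure α) [SFinite ρ] (f : β → α → ℝ) :
    Kernel β α :=
  (Kernel.const β ρ).withDensity fun b a => ENNReal.ofReal (f b a / ∫ a', f b a' ∂ρ)

variable {ρ : Measure α} [SFinite ρ] {f : β → α → ℝ}

instance : IsSFiniteKernel (normalizedDensityKernel ρ f) :=
  Kernel.IsSFiniteKernel.withDensity _ fun _ _ => ENNReal.ofReal_ne_top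

theorem normalizedDensityKernel_const_mul (f : β → α → ℝ) {c : ℝ} (hc : c ≠ 0) :
    normalizedDensityKernel ρ (fun b a => c * f b a) = normalizedDensityKernel ρ f := by
  simp only [normalizedDensityKernel, integral_const_mul, mul_div_mul_left _ _ hc]

theorem measurable_normalizedDensity (hf : Measurable (Function.uncurry f)) :
    Measurable (Function.uncurry fun b a => ENNReal.ofReal (f b a / ∫ a', f b a' ∂ρ)) :=
  (hf.div (hf.stronglyMeasurable.integral_prod_right'.measurable.comp measurable_fst)).ennreal_ofReal

theorem normalizedDensityKernel_apply (hf : Measurable (Function.uncurry f)) (b : β) :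
    normalizedDensityKernel ρ f b =
      ρ.withDensity fun a => ENNReal.ofReal (f b a / ∫ a', f b a' ∂ρ) := by
  rw [normalizedDensityKernel, Kernel.withDensity_apply _ (measurable_normalizedDensity hf),
    Kernel.const_apply]

theorem isMarkovKernel_normalizedDensityKernel (hf : Measurable (Function.uncurry f))
    (hf_nonneg : ∀ b a, 0 ≤ f b a) (hf_int : ∀ b, Integrable (f b) ρ)
    (hf_pos : ∀ b, 0 < ∫ a, f b a ∂ρ) : IsMarkovKernel (normalizedDensityKernel ρ f) := by
  refine ⟨fun b => ⟨?_⟩⟩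
  rw [normalizedDensityKernel_apply hf, withDensity_apply _ MeasurableSet.univ,
    Measure.restrict_univ, ← ofReal_integral_eq_lintegral_ofReal ((hf_int b).div_const _)
      (ae_of_all _ fun a => div_nonneg (hf_nonneg b a) (hf_pos b).le),
    integral_div, div_self (hf_pos b).ne', ENNReal.ofReal_one]

theorem withDensity_integral_compProd_normalizedDensityKernel (ν : Measure β) [SFinite ν]
    (hf : Measurable (Function.uncurry f)) (hf_pos : ∀ b, 0 < ∫ a, f b a ∂ρ) :
    ν.withDensity (fun b => ENNReal.ofReal (∫ a, f b a ∂ρ)) ⊗ₘ normalizedDensityKernel ρ f =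
      (ν.prod ρ).withDensity fun z => ENNReal.ofReal (f z.1 z.2) := by
  have hZ : Measurable fun b => ∫ a, f b a ∂ρ :=
    hf.stronglyMeasurable.integral_prod_right'.measurable
  have : IsSFiniteKernel ((Kernel.const β ρ).withDensity fun b a =>
      ENNReal.ofReal (f b a / ∫ a', f b a' ∂ρ)) :=
    inferInstanceAs (IsSFiniteKernel (normalizedDensityKernel ρ f))
  rw [normalizedDensityKernel, Measure.compProd_withDensity (measurable_normalizedDensity hf),
    Measure.compProd_const, prod_withDensity_left hZ.ennreal_ofReal,
    ← withDensity_mul (f := fun z : β × α => ENNReal.ofReal (∫ a, f z.1 a ∂ρ))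
      (g := fun z : β × α => ENNReal.ofReal (f z.1 z.2 / ∫ a, f z.1 a ∂ρ)) _
      (hZ.comp measurable_fst).ennreal_ofReal (measurable_normalizedDensity hf)]
  congr 1
  funext z
  rw [Pi.mul_apply, ← ENNReal.ofReal_mul (hf_pos z.1).le, mul_div_cancel₀ _ (hf_pos z.1).ne']

theorem condDistrib_ae_eq_normalizedDensityKernel [StandardBorelSpace α] [Nonempty α]
    {Ω : Type*} [MeasurableSpace Ω] {μ : Measure Ω} [IsFiniteMeasure μ] {X : Ω → α} {Y : Ω → β}
    (hX : Measurable X) (hY : Measurable Y) (ν : Measure β) [SFinite ν]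
    (hf : Measurable (Function.uncurry f)) (hf_nonneg : ∀ b a, 0 ≤ f b a)
    (hf_int : ∀ b, Integrable (f b) ρ) (hf_pos : ∀ b, 0 < ∫ a, f b a ∂ρ)
    (hjoint : μ.map (fun ω => (Y ω, X ω)) =
      (ν.prod ρ).withDensity fun z => ENNReal.ofReal (f z.1 z.2)) :
    condDistrib X Y μ =ᵐ[μ.map Y] normalizedDensityKernel ρ f := by
  have := isMarkovKernel_normalizedDensityKernel hf hf_nonneg hf_int hf_pos
  have hmarginal : μ.map Y = ν.withDensity fun b => ENNReal.ofReal (∫ a, f b a ∂ρ) := by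
    rw [show Y = Prod.fst ∘ fun ω => (Y ω, X ω) from rfl,
      ← Measure.map_map measurable_fst (hY.prodMk hX), hjoint,
      Measure.map_fst_withDensity_prod _ _ (g := fun z => ENNReal.ofReal (f z.1 z.2))
        hf.ennreal_ofReal]
    congr 1
    funext b
    exact (ofReal_integral_eq_lintegral_ofReal (hf_int b) (ae_of_all _ (hf_nonneg b))).symm
  refine condDistrib_ae_eq_of_measure_eq_compProd_of_measurable hY hX ?_
  rw [hjoint, hmarginal, withDensity_integral_compProd_normalizedDensityKernel ν hf hf_pos]

end ProbabilityTheory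

section Gaussian

variable {d : ℕ}

noncomputable def multiGaussianPDF (m : Fin d → ℝ) (C : Matrix (Fin d) (Fin d) ℝ)
    (x : Fin d → ℝ) : ℝ :=
  (Real.sqrt ((2 * π) ^ d * C.det))⁻¹ * Real.exp (-(1 / 2) * ((x - m) ⬝ᵥ C⁻¹.mulVec (x - m)))

theorem multiGaussian_eq_withDensity (m : Fin d → ℝ) (C : Matrix (Fin d) (Fin d) ℝ) :
    multiGaussian m C = volume.withDensity fun x => ENNReal.ofReal (multiGaussianPDF m C x) :=
  rfl

theorem continuous_dotProduct_mulVec_self {n : Type*} [Fintype n] (A : Matrix n n ℝ) :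
    Continuous fun v : n → ℝ => v ⬝ᵥ A.mulVec v :=
  continuous_id.dotProduct (continuous_const.matrix_mulVec continuous_id)

theorem measurable_multiGaussianPDF (m : Fin d → ℝ) (C : Matrix (Fin d) (Fin d) ℝ) :
    Measurable (multiGaussianPDF m C) :=
  (continuous_const.mul (Real.continuous_exp.comp (continuous_const.mul
    ((continuous_dotProduct_mulVec_self _).comp (continuous_id.sub continuous_const))))).measurable

theorem multiGaussianPDF_nonneg (m : Fin d → ℝ) (C : Matrix (Fin d) (Fin d) ℝ) (x : Fin d → ℝ) :
    0 ≤ multiGaussianPDF m C x := by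
  unfold multiGaussianPDF
  positivity

theorem integrable_exp_neg_half_dotProduct_mulVec (m : Fin d → ℝ)
    {C : Matrix (Fin d) (Fin d) ℝ} (hC : C.PosDef) [IsFiniteMeasure (multiGaussian m C)] :
    Integrable fun x : Fin d → ℝ => Real.exp (-(1 / 2) * ((x - m) ⬝ᵥ C⁻¹.mulVec (x - m))) := by
  have hpdf : Integrable (multiGaussianPDF m C) := by
    rw [← lintegral_ofReal_ne_top_iff_integrable
      (measurable_multiGaussianPDF m C).aestronglyMeasurable
      (ae_of_all _ (multiGaussianPDF_nonneg m C)), ← setLIntegral_univ,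
      ← withDensity_apply _ MeasurableSet.univ, ← multiGaussian_eq_withDensity]
    exact measure_ne_top _ _
  have hnorm : Real.sqrt ((2 * π) ^ d * C.det) ≠ 0 :=
    (Real.sqrt_pos.mpr (mul_pos (by positivity) hC.det_pos)).ne'
  convert hpdf.const_mul (Real.sqrt ((2 * π) ^ d * C.det)) using 2
  rw [multiGaussianPDF, mul_inv_cancel_left₀ hnorm]

variable {d' : ℕ}

noncomputable def gaussianMisfit (m : Fin d → ℝ) (C : Matrix (Fin d) (Fin d) ℝ)
    (R : Matrix (Fin d') (Fin d') ℝ) (φ : (Fin d → ℝ) → (Fin d' → ℝ)) (w : Fin d' → ℝ)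
    (u : Fin d → ℝ) : ℝ :=
  (1 / 2) * ((u - m) ⬝ᵥ C⁻¹.mulVec (u - m)) + (1 / 2) * ((w - φ u) ⬝ᵥ R⁻¹.mulVec (w - φ u))

variable (m : Fin d → ℝ) (C : Matrix (Fin d) (Fin d) ℝ) (R : Matrix (Fin d') (Fin d') ℝ)
  {φ : (Fin d → ℝ) → (Fin d' → ℝ)}

theorem measurable_gaussianMisfit (hφ : Measurable φ) :
    Measurable (Function.uncurry (gaussianMisfit m C R φ)) := by
  have hq {n : Type} [Fintype n] (A : Matrix n n ℝ) :
      Measurable fun v : n → ℝ => v ⬝ᵥ A.mulVec v :=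
    (continuous_dotProduct_mulVec_self A).measurable
  unfold gaussianMisfit
  fun_prop

theorem multiGaussianPDF_mul_multiGaussianPDF_sub (w : Fin d' → ℝ) (u : Fin d → ℝ) :
    multiGaussianPDF m C u * multiGaussianPDF 0 R (w - φ u) =
      (Real.sqrt ((2 * π) ^ d * C.det) * Real.sqrt ((2 * π) ^ d' * R.det))⁻¹ *
        Real.exp (-gaussianMisfit m C R φ w u) := by
  simp only [multiGaussianPDF, gaussianMisfit, sub_zero, mul_inv, neg_add, Real.exp_add, neg_mul]
  ring

variable {C R}

theorem integrable_exp_neg_gaussianMisfit (hC : C.PosDef) (hR : R.PosDef) (hφ : Measurable φ)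
    [IsFiniteMeasure (multiGaussian m C)] (w : Fin d' → ℝ) :
    Integrable fun u => Real.exp (-gaussianMisfit m C R φ w u) := by
  refine (integrable_exp_neg_half_dotProduct_mulVec m hC).mono
    ((measurable_gaussianMisfit m C R hφ).comp measurable_prodMk_left).neg.exp.aestronglyMeasurable
    (ae_of_all _ fun u => ?_)
  have hR_nonneg := hR.inv.posSemidef.dotProduct_mulVec_nonneg (w - φ u)
  simp only [star_trivial] at hR_nonneg
  simp only [Real.norm_eq_abs, Real.abs_exp, Real.exp_le_exp, gaussianMisfit]
  linarith

end Gaussian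

/-- Bayes' rule for the measurement update: if `x ~ N(m, C)`, `η ~ N(0, R)` is independent of
`x`, and `y = φ(x) + η`, then for `(law y)`-a.e. `y₀` the regular conditional distribution of
`x` given `y = y₀` has Lebesgue density proportional to `exp(−J)` where `J` is the misfit
function `J(u) = ½‖u − m‖²_C + ½‖y₀ − φ(u)‖²_R`. -/
theorem condDistrib_density_exp_neg_misfit
    {Ω : Type*} [MeasurableSpace Ω] (μ : Measure Ω) [IsProbabilityMeasure μ]
    {d d' : ℕ}
    (x : Ω → (Fin d → ℝ)) (η : Ω → (Fin d' → ℝ)) (φ : (Fin d → ℝ) → (Fin d' → ℝ))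
    (hx : Measurable x) (hη : Measurable η) (hφ : Measurable φ)
    (m : Fin d → ℝ) (C : Matrix (Fin d) (Fin d) ℝ) (R : Matrix (Fin d') (Fin d') ℝ)
    (hC : C.PosDef) (hR : R.PosDef)
    (hxlaw : μ.map x = multiGaussian m C)
    (hηlaw : μ.map η = multiGaussian 0 R)
    (hindep : IndepFun x η μ)
    (y : Ω → (Fin d' → ℝ)) (hy : y = fun ω => φ (x ω) + η ω)
    (J : (Fin d' → ℝ) → (Fin d → ℝ) → ℝ)
    (hJ : J = fun y₀ u =>
      (1 / 2) * ((u - m) ⬝ᵥ C⁻¹.mulVec (u - m)) +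
      (1 / 2) * ((y₀ - φ u) ⬝ᵥ R⁻¹.mulVec (y₀ - φ u))) :
    ∀ᵐ y₀ ∂(μ.map y),
      Integrable (fun v => Real.exp (-(J y₀ v))) (volume : Measure (Fin d → ℝ)) ∧
      (0 < ∫ v, Real.exp (-(J y₀ v))) ∧
      condDistrib x y μ y₀ =
        volume.withDensity fun u =>
          ENNReal.ofReal (Real.exp (-(J y₀ u)) / ∫ v, Real.exp (-(J y₀ v))) := by
  obtain rfl : J = gaussianMisfit m C R φ := hJ
  have : IsProbabilityMeasure (multiGaussian m C) :=
    hxlaw ▸ Measure.isProbabilityMeasure_map hx.aemeasurable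
  set c := (Real.sqrt ((2 * π) ^ d * C.det) * Real.sqrt ((2 * π) ^ d' * R.det))⁻¹
  have hc : 0 < c := by
    have := hC.det_pos
    have := hR.det_pos
    positivity
  have hJm := measurable_gaussianMisfit m C R hφ
  have hint := integrable_exp_neg_gaussianMisfit m hC hR hφ
  have hpos : ∀ w, 0 < ∫ u, Real.exp (-gaussianMisfit m C R φ w u) :=
    fun w => integral_exp_pos (hint w)
  have hjoint : μ.map (fun ω => (y ω, x ω)) = (volume.prod volume).withDensity
      fun z => ENNReal.ofReal (c * Real.exp (-gaussianMisfit m C R φ z.1 z.2)) := by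
    rw [hy, hindep.map_add_prod_eq_withDensity hx hη
      (measurable_multiGaussianPDF m C).ennreal_ofReal
      (measurable_multiGaussianPDF 0 R).ennreal_ofReal hxlaw hηlaw hφ]
    simp only [← ENNReal.ofReal_mul (multiGaussianPDF_nonneg _ _ _),
      multiGaussianPDF_mul_multiGaussianPDF_sub]
    rfl
  have hbayes := condDistrib_ae_eq_normalizedDensityKernel hx (hy ▸ (hφ.comp hx).add hη) volume
    (hJm.neg.exp.const_mul c) (fun _ _ => by positivity) (fun w => (hint w).const_mul c)
    (fun w => by rw [integral_const_mul]; exact mul_pos hc (hpos w)) hjoint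
  filter_upwards [hbayes] with w hw
  rw [hw, normalizedDensityKernel_const_mul _ hc.ne', normalizedDensityKernel_apply hJm.neg.exp]
  exact ⟨hint w, hpos w, rfl⟩
end

section
/- Let A be a d×d real matrix, B a d×D real matrix, C a d×d positive definite real matrix, Γ a D×D positive definite real matrix, H a d'×d real matrix, and R a d'×d' positive definite real matrix. Let 𝒞 be the (d+D)×(d+D) block-diagonal matrix with blocks C and Γ, let F = [A B] be the d×(d+D) matrix with blocks A and B, let M = H F, let S = M 𝒞 Mᵀ + R, and let G = 𝒞 Mᵀ S⁻¹ (the smoothing-filter gain). Let P = A C Aᵀ + B Γ Bᵀ and K = P Hᵀ (H P Hᵀ + R)⁻¹ (the conventional-filter gain). Then S = H P Hᵀ + R and F G = K. (For a linear forward model x_{n+1} = A x_n + B ξ_n and linear observation y = H x_{n+1} + η, this shows that pushing the smoothing measurement update of the augmented state (x_n, ξ_n) through the forward model produces the same mean update as the conventional Kalman measurement update.) -/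
open Matrix

section

variable {α m n₁ n₂ o l : Type*} [CommRing α] [Fintype n₁] [Fintype n₂] [Fintype o]

theorem fromCols_mul_fromBlocks_diag_mul_transpose_fromCols
    (A : Matrix m n₁ α) (B : Matrix m n₂ α) (C : Matrix n₁ n₁ α) (Γ : Matrix n₂ n₂ α) :
    fromCols A B * fromBlocks C 0 0 Γ * (fromCols A B)ᵀ = A * C * Aᵀ + B * Γ * Bᵀ := by
  rw [fromCols_mul_fromBlocks, transpose_fromCols, fromCols_mul_fromRows]
  simp

variable [Fintype m]

theorem mul_mul_transpose_mul (H : Matrix l m α) (F : Matrix m o α) (𝒞 : Matrix o o α) :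
    H * F * 𝒞 * (H * F)ᵀ = H * (F * 𝒞 * Fᵀ) * Hᵀ := by
  simp only [transpose_mul, Matrix.mul_assoc]

theorem mul_mul_mul_transpose_mul [Fintype l] (H : Matrix l m α) (F : Matrix m o α)
    (𝒞 : Matrix o o α) (X : Matrix l l α) :
    F * (𝒞 * (H * F)ᵀ * X) = F * 𝒞 * Fᵀ * Hᵀ * X := by
  simp only [transpose_mul, Matrix.mul_assoc]

end

theorem smoothing_gain_pushforward_eq_kalman_gain_general
    {d D d' : ℕ}
    (A : Matrix (Fin d) (Fin d) ℝ) (B : Matrix (Fin d) (Fin D) ℝ)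
    (C : Matrix (Fin d) (Fin d) ℝ) (Γ : Matrix (Fin D) (Fin D) ℝ)
    (H : Matrix (Fin d') (Fin d) ℝ) (R : Matrix (Fin d') (Fin d') ℝ)
    (𝒞 : Matrix (Fin d ⊕ Fin D) (Fin d ⊕ Fin D) ℝ)
    (h𝒞 : 𝒞 = Matrix.fromBlocks C 0 0 Γ)
    (F : Matrix (Fin d) (Fin d ⊕ Fin D) ℝ) (hF : F = Matrix.fromCols A B)
    (M : Matrix (Fin d') (Fin d ⊕ Fin D) ℝ) (hM : M = H * F)
    (S : Matrix (Fin d') (Fin d') ℝ) (hS : S = M * 𝒞 * Mᵀ + R)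
    (G : Matrix (Fin d ⊕ Fin D) (Fin d') ℝ) (hG : G = 𝒞 * Mᵀ * S⁻¹)
    (P : Matrix (Fin d) (Fin d) ℝ) (hP : P = A * C * Aᵀ + B * Γ * Bᵀ)
    (K : Matrix (Fin d) (Fin d') ℝ) (hK : K = P * Hᵀ * (H * P * Hᵀ + R)⁻¹) :
    S = H * P * Hᵀ + R ∧ F * G = K := by
  have hP' : F * 𝒞 * Fᵀ = P := by
    rw [hF, h𝒞, hP, fromCols_mul_fromBlocks_diag_mul_transpose_fromCols]
  have hS' : S = H * P * Hᵀ + R := by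
    rw [hS, hM, mul_mul_transpose_mul, hP']
  refine ⟨hS', ?_⟩
  rw [hG, hK, ← hS', hM, mul_mul_mul_transpose_mul, hP']

/-- For a linear forward model `x' = Ax + Bξ` and linear observation `y = Hx' + η`:
the innovation covariance of the smoothing filter (conditioning the augmented state
`(x, ξ)` with block-diagonal covariance `𝒞 = diag(C, Γ)` on `y`) equals that of the
conventional filter, `S = HPHᵀ + R` with `P = ACAᵀ + BΓBᵀ`, and pushing the smoothing
gain `G = 𝒞MᵀS⁻¹` through the forward map `F = [A B]` recovers the Kalman gain
`K = PHᵀ(HPHᵀ+R)⁻¹`. -/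
theorem smoothing_gain_pushforward_eq_kalman_gain
    {d D d' : ℕ}
    (A : Matrix (Fin d) (Fin d) ℝ) (B : Matrix (Fin d) (Fin D) ℝ)
    (C : Matrix (Fin d) (Fin d) ℝ) (Γ : Matrix (Fin D) (Fin D) ℝ)
    (H : Matrix (Fin d') (Fin d) ℝ) (R : Matrix (Fin d') (Fin d') ℝ)
    (hC : C.PosDef) (hΓ : Γ.PosDef) (hR : R.PosDef)
    (𝒞 : Matrix (Fin d ⊕ Fin D) (Fin d ⊕ Fin D) ℝ)
    (h𝒞 : 𝒞 = Matrix.fromBlocks C 0 0 Γ)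
    (F : Matrix (Fin d) (Fin d ⊕ Fin D) ℝ) (hF : F = Matrix.fromCols A B)
    (M : Matrix (Fin d') (Fin d ⊕ Fin D) ℝ) (hM : M = H * F)
    (S : Matrix (Fin d') (Fin d') ℝ) (hS : S = M * 𝒞 * Mᵀ + R)
    (G : Matrix (Fin d ⊕ Fin D) (Fin d') ℝ) (hG : G = 𝒞 * Mᵀ * S⁻¹)
    (P : Matrix (Fin d) (Fin d) ℝ) (hP : P = A * C * Aᵀ + B * Γ * Bᵀ)
    (K : Matrix (Fin d) (Fin d') ℝ) (hK : K = P * Hᵀ * (H * P * Hᵀ + R)⁻¹) :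
    S = H * P * Hᵀ + R ∧ F * G = K :=
  smoothing_gain_pushforward_eq_kalman_gain_general A B C Γ H R 𝒞 h𝒞 F hF M hM S hS G hG P hP K hK
end

section
/- Let A be a d×d real matrix, B a d×D real matrix, C a d×d positive definite real matrix, Γ a D×D positive definite real matrix, H a d'×d real matrix, and R a d'×d' positive definite real matrix. Let 𝒞 be the (d+D)×(d+D) block-diagonal matrix with blocks C and Γ, let F = [A B], M = H F, S = M 𝒞 Mᵀ + R, G = 𝒞 Mᵀ S⁻¹, P = A C Aᵀ + B Γ Bᵀ, and K = P Hᵀ (H P Hᵀ + R)⁻¹. Then F (𝒞 − G M 𝒞) Fᵀ = P − K H P. (For a linear forward model and linear observation, this shows that the covariance produced by the smoothing filter — measurement update of the augmented state followed by propagation through the forward model — equals the covariance produced by the conventional Kalman filter — propagation followed by measurement update.) -/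
/-! Writing `M = H F`, the smoothing covariance is `F 𝒞 Fᵀ − (F 𝒞 Fᵀ) Hᵀ S⁻¹ H (F 𝒞 Fᵀ)` with
`S = H (F 𝒞 Fᵀ) Hᵀ + R`, which is the Kalman update of `F 𝒞 Fᵀ`; and `F 𝒞 Fᵀ = P` because `𝒞` is
block diagonal. -/

open Matrix

namespace Matrix

variable {l m n α : Type*} [Fintype l] [Fintype m] [CommRing α]

theorem fromCols_mul_fromBlocks_diagonal_mul_transpose (A : Matrix n l α) (B : Matrix n m α)
    (C : Matrix l l α) (Γ : Matrix m m α) :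
    fromCols A B * fromBlocks C 0 0 Γ * (fromCols A B)ᵀ = A * C * Aᵀ + B * Γ * Bᵀ := by
  rw [fromCols_mul_fromBlocks, transpose_fromCols, fromCols_mul_fromRows]
  simp

variable [Fintype n] [DecidableEq l]

/-- Covariance of `x` given `H x + η`, for `x`, `η` independent Gaussians of covariances
`P`, `R`. -/
noncomputable def posteriorCovariance (P : Matrix n n α) (H : Matrix l n α) (R : Matrix l l α) :
    Matrix n n α :=
  P - P * Hᵀ * (H * P * Hᵀ + R)⁻¹ * H * P

theorem mul_posteriorCovariance_mul_transpose (F : Matrix n m α) (𝒞 : Matrix m m α)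
    (H : Matrix l n α) (R : Matrix l l α) :
    F * posteriorCovariance 𝒞 (H * F) R * Fᵀ = posteriorCovariance (F * 𝒞 * Fᵀ) H R := by
  simp only [posteriorCovariance, transpose_mul, Matrix.mul_sub, Matrix.sub_mul,
    Matrix.mul_assoc]

end Matrix

theorem smoothing_covariance_eq_kalman_covariance_general
    {d D d' : ℕ}
    (A : Matrix (Fin d) (Fin d) ℝ) (B : Matrix (Fin d) (Fin D) ℝ)
    (C : Matrix (Fin d) (Fin d) ℝ) (Γ : Matrix (Fin D) (Fin D) ℝ)
    (H : Matrix (Fin d') (Fin d) ℝ) (R : Matrix (Fin d') (Fin d') ℝ)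
    (𝒞 : Matrix (Fin d ⊕ Fin D) (Fin d ⊕ Fin D) ℝ)
    (h𝒞 : 𝒞 = Matrix.fromBlocks C 0 0 Γ)
    (F : Matrix (Fin d) (Fin d ⊕ Fin D) ℝ) (hF : F = Matrix.fromCols A B)
    (M : Matrix (Fin d') (Fin d ⊕ Fin D) ℝ) (hM : M = H * F)
    (S : Matrix (Fin d') (Fin d') ℝ) (hS : S = M * 𝒞 * Mᵀ + R)
    (G : Matrix (Fin d ⊕ Fin D) (Fin d') ℝ) (hG : G = 𝒞 * Mᵀ * S⁻¹)
    (P : Matrix (Fin d) (Fin d) ℝ) (hP : P = A * C * Aᵀ + B * Γ * Bᵀ)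
    (K : Matrix (Fin d) (Fin d') ℝ) (hK : K = P * Hᵀ * (H * P * Hᵀ + R)⁻¹) :
    F * (𝒞 - G * M * 𝒞) * Fᵀ = P - K * H * P := by
  have hFCF : F * 𝒞 * Fᵀ = P := by
    rw [hF, h𝒞, hP, fromCols_mul_fromBlocks_diagonal_mul_transpose]
  subst hG hS hM hK
  have hpropagated := mul_posteriorCovariance_mul_transpose F 𝒞 H R
  rwa [hFCF] at hpropagated

/-- For a linear forward model and linear observation, the covariance produced by the
smoothing filter — measurement update of the augmented state `(x, ξ)` followed by
propagation through the forward map `F = [A B]` — equals the covariance produced by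
the conventional Kalman filter — propagation followed by measurement update:
`F(𝒞 − GM𝒞)Fᵀ = P − KHP`. -/
theorem smoothing_covariance_eq_kalman_covariance
    {d D d' : ℕ}
    (A : Matrix (Fin d) (Fin d) ℝ) (B : Matrix (Fin d) (Fin D) ℝ)
    (C : Matrix (Fin d) (Fin d) ℝ) (Γ : Matrix (Fin D) (Fin D) ℝ)
    (H : Matrix (Fin d') (Fin d) ℝ) (R : Matrix (Fin d') (Fin d') ℝ)
    (hC : C.PosDef) (hΓ : Γ.PosDef) (hR : R.PosDef)
    (𝒞 : Matrix (Fin d ⊕ Fin D) (Fin d ⊕ Fin D) ℝ)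
    (h𝒞 : 𝒞 = Matrix.fromBlocks C 0 0 Γ)
    (F : Matrix (Fin d) (Fin d ⊕ Fin D) ℝ) (hF : F = Matrix.fromCols A B)
    (M : Matrix (Fin d') (Fin d ⊕ Fin D) ℝ) (hM : M = H * F)
    (S : Matrix (Fin d') (Fin d') ℝ) (hS : S = M * 𝒞 * Mᵀ + R)
    (G : Matrix (Fin d ⊕ Fin D) (Fin d') ℝ) (hG : G = 𝒞 * Mᵀ * S⁻¹)
    (P : Matrix (Fin d) (Fin d) ℝ) (hP : P = A * C * Aᵀ + B * Γ * Bᵀ)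
    (K : Matrix (Fin d) (Fin d') ℝ) (hK : K = P * Hᵀ * (H * P * Hᵀ + R)⁻¹) :
    F * (𝒞 - G * M * 𝒞) * Fᵀ = P - K * H * P :=
  smoothing_covariance_eq_kalman_covariance_general A B C Γ H R 𝒞 h𝒞 F hF M hM S hS G hG P hP K hK
end

section
/- Let A be a d×d real matrix, B a d×D real matrix, C a d×d positive definite real matrix, Γ a D×D positive definite real matrix, H a d'×d real matrix, and R a d'×d' positive definite real matrix. Let 𝒞 be the (d+D)×(d+D) block-diagonal matrix with blocks C and Γ, let F = [A B], M = H F, S = M 𝒞 Mᵀ + R, G = 𝒞 Mᵀ S⁻¹, and P = A C Aᵀ + B Γ Bᵀ. Then the lower D×d' block of the gain matrix G (the rows corresponding to the noise component ξ) equals Γ Bᵀ Hᵀ (H P Hᵀ + R)⁻¹. Consequently, for a joint Gaussian with x ~ N(m, C) and independent noise ξ ~ N(0, Γ), the conditional mean of ξ given the observation is Γ Bᵀ Hᵀ (H P Hᵀ + R)⁻¹ (y − H A m), which is nonzero in general: the driving noise conditioned on the future observation is biased. -/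
/-!
With `M = [HA HB]` and `𝒞` block diagonal, `𝒞Mᵀ` stacks `CAᵀHᵀ` over `ΓBᵀHᵀ`, and
`M𝒞Mᵀ = HACAᵀHᵀ + HBΓBᵀHᵀ = HPHᵀ`, so `S = HPHᵀ + R`. Right multiplication by `S⁻¹` acts
row-block by row-block, which gives the noise block of `G`, and the noise component of the
conditional mean only sees that block since the prior mean of `ξ` is `0`.
-/

open Matrix

namespace Matrix

variable {l m n α : Type*} [Fintype m] [Fintype n] [CommRing α]

theorem fromBlocks_zero_zero_mul_transpose_fromCols (C : Matrix m m α) (Γ : Matrix n n α)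
    (X : Matrix l m α) (Y : Matrix l n α) :
    fromBlocks C 0 0 Γ * (fromCols X Y)ᵀ = fromRows (C * Xᵀ) (Γ * Yᵀ) := by
  simp [transpose_fromCols, fromBlocks_mul_fromRows]

theorem fromCols_mul_fromBlocks_zero_zero_mul_transpose_fromCols (C : Matrix m m α)
    (Γ : Matrix n n α) (X : Matrix l m α) (Y : Matrix l n α) :
    fromCols X Y * fromBlocks C 0 0 Γ * (fromCols X Y)ᵀ = X * C * Xᵀ + Y * Γ * Yᵀ := by
  rw [Matrix.mul_assoc, fromBlocks_zero_zero_mul_transpose_fromCols, fromCols_mul_fromRows,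
    Matrix.mul_assoc, Matrix.mul_assoc]

end Matrix

theorem smoothing_gain_noise_block_general
    {d D d' : ℕ}
    (A : Matrix (Fin d) (Fin d) ℝ) (B : Matrix (Fin d) (Fin D) ℝ)
    (C : Matrix (Fin d) (Fin d) ℝ) (Γ : Matrix (Fin D) (Fin D) ℝ)
    (H : Matrix (Fin d') (Fin d) ℝ) (R : Matrix (Fin d') (Fin d') ℝ)
    (𝒞 : Matrix (Fin d ⊕ Fin D) (Fin d ⊕ Fin D) ℝ)
    (h𝒞 : 𝒞 = Matrix.fromBlocks C 0 0 Γ)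
    (F : Matrix (Fin d) (Fin d ⊕ Fin D) ℝ) (hF : F = Matrix.fromCols A B)
    (M : Matrix (Fin d') (Fin d ⊕ Fin D) ℝ) (hM : M = H * F)
    (S : Matrix (Fin d') (Fin d') ℝ) (hS : S = M * 𝒞 * Mᵀ + R)
    (G : Matrix (Fin d ⊕ Fin D) (Fin d') ℝ) (hG : G = 𝒞 * Mᵀ * S⁻¹)
    (P : Matrix (Fin d) (Fin d) ℝ) (hP : P = A * C * Aᵀ + B * Γ * Bᵀ) :
    G.submatrix Sum.inr (id : Fin d' → Fin d') =
      Γ * Bᵀ * Hᵀ * (H * P * Hᵀ + R)⁻¹ ∧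
    ∀ (m : Fin d → ℝ) (y : Fin d' → ℝ),
      (fun j => (Sum.elim m (0 : Fin D → ℝ) + G.mulVec (y - (H * A).mulVec m)) (Sum.inr j)) =
        (Γ * Bᵀ * Hᵀ * (H * P * Hᵀ + R)⁻¹).mulVec (y - (H * A).mulVec m) := by
  have hM' : M = fromCols (H * A) (H * B) := by rw [hM, hF, mul_fromCols]
  have hS' : S = H * P * Hᵀ + R := by
    rw [hS, h𝒞, hM', fromCols_mul_fromBlocks_zero_zero_mul_transpose_fromCols, hP]
    simp only [transpose_mul, Matrix.mul_add, Matrix.add_mul, Matrix.mul_assoc]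
  have hG' : G = fromRows (C * Aᵀ * Hᵀ * (H * P * Hᵀ + R)⁻¹)
      (Γ * Bᵀ * Hᵀ * (H * P * Hᵀ + R)⁻¹) := by
    rw [hG, hS', h𝒞, hM', fromBlocks_zero_zero_mul_transpose_fromCols, fromRows_mul]
    simp only [transpose_mul, Matrix.mul_assoc]
  refine ⟨by rw [hG']; rfl, fun m y => ?_⟩
  ext j
  simp only [hG', fromRows_mulVec, Pi.add_apply, Sum.elim_inr, Pi.zero_apply, zero_add]

/-- The lower (noise) block of the smoothing-filter gain `G = 𝒞MᵀS⁻¹` equals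
`ΓBᵀHᵀ(HPHᵀ+R)⁻¹`; consequently, the conditional mean of the driving noise `ξ`
(prior mean `0`) given the observation `y` is `ΓBᵀHᵀ(HPHᵀ+R)⁻¹(y − HAm)`: the driving
noise conditioned on the future observation is biased. -/
theorem smoothing_gain_noise_block
    {d D d' : ℕ}
    (A : Matrix (Fin d) (Fin d) ℝ) (B : Matrix (Fin d) (Fin D) ℝ)
    (C : Matrix (Fin d) (Fin d) ℝ) (Γ : Matrix (Fin D) (Fin D) ℝ)
    (H : Matrix (Fin d') (Fin d) ℝ) (R : Matrix (Fin d') (Fin d') ℝ)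
    (hC : C.PosDef) (hΓ : Γ.PosDef) (hR : R.PosDef)
    (𝒞 : Matrix (Fin d ⊕ Fin D) (Fin d ⊕ Fin D) ℝ)
    (h𝒞 : 𝒞 = Matrix.fromBlocks C 0 0 Γ)
    (F : Matrix (Fin d) (Fin d ⊕ Fin D) ℝ) (hF : F = Matrix.fromCols A B)
    (M : Matrix (Fin d') (Fin d ⊕ Fin D) ℝ) (hM : M = H * F)
    (S : Matrix (Fin d') (Fin d') ℝ) (hS : S = M * 𝒞 * Mᵀ + R)
    (G : Matrix (Fin d ⊕ Fin D) (Fin d') ℝ) (hG : G = 𝒞 * Mᵀ * S⁻¹)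
    (P : Matrix (Fin d) (Fin d) ℝ) (hP : P = A * C * Aᵀ + B * Γ * Bᵀ) :
    G.submatrix Sum.inr (id : Fin d' → Fin d') =
      Γ * Bᵀ * Hᵀ * (H * P * Hᵀ + R)⁻¹ ∧
    ∀ (m : Fin d → ℝ) (y : Fin d' → ℝ),
      (fun j => (Sum.elim m (0 : Fin D → ℝ) + G.mulVec (y - (H * A).mulVec m)) (Sum.inr j)) =
        (Γ * Bᵀ * Hᵀ * (H * P * Hᵀ + R)⁻¹).mulVec (y - (H * A).mulVec m) :=
  smoothing_gain_noise_block_general A B C Γ H R 𝒞 h𝒞 F hF M hM S hS G hG P hP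
end
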